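/- Suppose B > 2(1 − p − s)²/(1 − (1 − p − s)²) and (p − s)B ≥ p + s. Then for every η with s/p ≤ η ≤ 1 there exists exactly one equilibrium Ψ* in [0, (p − s)B]. Moreover: if s/p ≤ η ≤ Ψ₂/(Bp) + s/p, then Ψ* ∈ [0, Ψ₂]; if Ψ₂/(Bp) + s/p ≤ η ≤ (p + s)²(2 − p − s)/(2p(1 − p − s)²) + s/p, then Ψ* ∈ [Ψ₂, p + s]; and if (p + s)²(2 − p − s)/(2p(1 − p − s)²) + s/p < η ≤ 1, then Ψ* ∈ [p + s, (p − s)B]. -/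
import Mathlib


/-- Requesters' share. -/
noncomputable def R (p s Ψ : ℝ) : ℝ := (1 - Ψ) * (1 - p - s)

/-- Agents' share in the high-benefit regime. -/
noncomputable def A₁ (p s Ψ : ℝ) : ℝ := ((2 * Ψ - p - s) * (p + s)) / 2 + Ψ * (1 - p - s)

/-- Agents' share in the low-benefit regime. -/
noncomputable def A₂ (p s Ψ : ℝ) : ℝ := Ψ ^ 2 / 2 + (1 - p - s) * Ψ

/-- Threshold Ψ₁. -/
noncomputable def Ψ₁ (p s B : ℝ) : ℝ := (1 - p - s + (B / 2) * (p + s) ^ 2) / (1 - p - s + B)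

/-- Threshold Ψ₂. -/
noncomputable def Ψ₂ (p s B : ℝ) : ℝ :=
  -(1 - p - s) * (1 + 1 / B) +
    Real.sqrt (1 - p - s) * Real.sqrt ((1 - p - s) * (1 + 1 / B) ^ 2 + 2 / B)

/-- A value `Ψ` is an equilibrium of the Stage II subgame:
in the low-benefit regime (`Ψ < p + s`) via the Ψ₂-threshold conditions,
and in the high-benefit regime (`p + s ≤ Ψ`) via the Ψ₁-threshold conditions. -/
noncomputable def IsEquilibrium (p s B η Ψ : ℝ) : Prop :=
  (Ψ < p + s ∧
    ((Ψ₂ p s B ≤ Ψ ∧ Ψ * A₂ p s Ψ = (η * p - s) * R p s Ψ) ∨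
     (Ψ < Ψ₂ p s B ∧ Ψ = (η * p - s) * B))) ∨
  (p + s ≤ Ψ ∧
    ((Ψ₁ p s B ≤ Ψ ∧ Ψ * A₁ p s Ψ = (η * p - s) * R p s Ψ) ∨
     (Ψ < Ψ₁ p s B ∧ Ψ = (η * p - s) * B)))


lemma psi2_spec (p s B : ℝ) (hq : 0 < 1 - p - s) (hB : 0 < B) :
    0 < Ψ₂ p s B ∧
      B * (Ψ₂ p s B) ^ 2 + 2 * (1 - p - s) * (B + 1) * (Ψ₂ p s B) - 2 * (1 - p - s) = 0 := by
  have hBne : B ≠ 0 := hB.ne'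
  obtain ⟨a, ha⟩ : ∃ a : ℝ, a = (1 - p - s) * (1 + 1 / B) := ⟨_, rfl⟩
  obtain ⟨t, htdef⟩ : ∃ t : ℝ, t = Real.sqrt (a ^ 2 + 2 * (1 - p - s) / B) := ⟨_, rfl⟩
  have ha0 : 0 ≤ a := by rw [ha]; positivity
  have hd : (0:ℝ) ≤ a ^ 2 + 2 * (1 - p - s) / B := by positivity
  have hsqrt : Real.sqrt (1 - p - s) * Real.sqrt ((1 - p - s) * (1 + 1 / B) ^ 2 + 2 / B) = t := by
    rw [htdef, ← Real.sqrt_mul hq.le]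
    congr 1
    rw [ha]; ring
  have ht2 : t ^ 2 = a ^ 2 + 2 * (1 - p - s) / B := by rw [htdef]; exact Real.sq_sqrt hd
  have ht2' : B * t ^ 2 = B * a ^ 2 + 2 * (1 - p - s) := by rw [ht2]; field_simp
  have hat : a < t := by
    rw [htdef, Real.lt_sqrt ha0]
    have : 0 < 2 * (1 - p - s) / B := by positivity
    linarith
  have haB : a * B = (1 - p - s) * (B + 1) := by rw [ha]; field_simp
  have hpsi : Ψ₂ p s B = -a + t := by rw [Ψ₂, hsqrt, ha]; ring
  constructor
  · rw [hpsi]; linarith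
  · rw [hpsi]
    linear_combination ht2' + (2 * a - 2 * t) * haB

lemma psi2_lt (p s B : ℝ) (hq : 0 < 1 - p - s) (hpp : 0 < p + s) (hB : 0 < B)
    (hBgt : 2 * (1 - p - s) ^ 2 < B * (1 - (1 - p - s) ^ 2))
    (hP2eq : B * (Ψ₂ p s B) ^ 2 + 2 * (1 - p - s) * (B + 1) * (Ψ₂ p s B) - 2 * (1 - p - s) = 0) :
    Ψ₂ p s B < p + s := by
  by_contra hcon
  push_neg at hcon
  nlinarith [hP2eq,
    mul_nonneg (mul_nonneg hB.le (sub_nonneg.2 hcon))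
      (by linarith : (0:ℝ) ≤ Ψ₂ p s B + (p + s)),
    mul_nonneg (mul_nonneg hq.le (sub_nonneg.2 hcon)) hB.le,
    mul_nonneg hq.le (sub_nonneg.2 hcon)]

lemma psi1_lt (p s B : ℝ) (hq : 0 < 1 - p - s) (hps : 0 < p + s) (hB : 0 < B)
    (hBgt : 2 * (1 - p - s) ^ 2 < B * (1 - (1 - p - s) ^ 2)) :
    Ψ₁ p s B < p + s := by
  rw [Ψ₁, div_lt_iff₀ (by linarith : (0:ℝ) < 1 - p - s + B)]
  nlinarith [hBgt]

lemma F2mono (p s k x y : ℝ) (hq : 0 < 1 - p - s) (hk0 : 0 ≤ k) (hx : 0 ≤ x) (hxy : x < y) :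
    x * A₂ p s x - k * R p s x < y * A₂ p s y - k * R p s y := by
  have hy : 0 < y := lt_of_le_of_lt hx hxy
  have hfac : 0 < (x ^ 2 + x * y + y ^ 2) / 2 + (1 - p - s) * (x + y) + k * (1 - p - s) := by
    linarith [sq_nonneg x, pow_pos hy 2, mul_nonneg hk0 hq.le, mul_nonneg hx hy.le,
      mul_pos hq (show (0:ℝ) < x + y by linarith)]
  have key : (y * A₂ p s y - k * R p s y) - (x * A₂ p s x - k * R p s x)
      = (y - x) * ((x ^ 2 + x * y + y ^ 2) / 2 + (1 - p - s) * (x + y) + k * (1 - p - s)) := by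
    simp only [A₂, R]; ring
  linarith [key, mul_pos (sub_pos.2 hxy) hfac]

lemma F1mono (p s k x y : ℝ) (hq : 0 < 1 - p - s) (hps : 0 < p + s) (hk0 : 0 ≤ k)
    (hx : p + s ≤ x) (hxy : x < y) :
    x * A₁ p s x - k * R p s x < y * A₁ p s y - k * R p s y := by
  have hfac : 0 < x + y - (p + s) ^ 2 / 2 + k * (1 - p - s) := by
    nlinarith [mul_nonneg hk0 hq.le, mul_pos hps hq]
  have key : (y * A₁ p s y - k * R p s y) - (x * A₁ p s x - k * R p s x)
      = (y - x) * (x + y - (p + s) ^ 2 / 2 + k * (1 - p - s)) := by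
    simp only [A₁, R]; ring
  linarith [key, mul_pos (sub_pos.2 hxy) hfac]

lemma quad_end (p s B k : ℝ) (hs : 0 < s) (hsp : s < p) (hps : p + s < 1) (hB : 0 < B)
    (hBgt : 2 * (1 - p - s) ^ 2 < B * (1 - (1 - p - s) ^ 2))
    (hcap : p + s ≤ (p - s) * B) (hk0 : 0 ≤ k) (hk1 : k ≤ p - s) :
    0 ≤ ((p - s) * B) * A₁ p s ((p - s) * B) - k * R p s ((p - s) * B) := by
  have hq : 0 < 1 - p - s := by linarith
  have hMpos : (0:ℝ) < (p - s) * B := lt_of_lt_of_le (by linarith) hcap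
  simp only [A₁, R]
  rcases le_or_gt 1 ((p - s) * B) with h1M | h1M
  · nlinarith [mul_nonneg (mul_nonneg hk0 hq.le) (sub_nonneg.2 h1M),
      mul_nonneg hMpos.le (show (0:ℝ) ≤ (p - s) * B - (p + s) ^ 2 / 2 by nlinarith)]
  · nlinarith [mul_nonneg (sub_nonneg.2 hcap) hMpos.le,
      mul_pos (show (0:ℝ) < p - s by linarith) (sub_pos.2 hBgt),
      mul_nonneg (mul_nonneg (sub_nonneg.2 hk1) hq.le)
        (by linarith : (0:ℝ) ≤ 1 - (p - s) * B),
      mul_nonneg (mul_nonneg (show (0:ℝ) ≤ p - s by linarith) hq.le)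
        (by linarith : (0:ℝ) ≤ (1 - p - s) - (1 - (p - s) * B))]

set_option maxHeartbeats 1000000 in
theorem stmt_14 (p s B : ℝ) (hs : 0 < s) (hsp : s < p) (hps : p + s < 1) (hB : 0 < B)
    (hBgt : B > 2 * (1 - p - s) ^ 2 / (1 - (1 - p - s) ^ 2))
    (hcap : p + s ≤ (p - s) * B) :
    ∀ η : ℝ, s / p ≤ η → η ≤ 1 →
      (∃! Ψ : ℝ, Ψ ∈ Set.Icc 0 ((p - s) * B) ∧ IsEquilibrium p s B η Ψ) ∧
      (∀ Ψ : ℝ, Ψ ∈ Set.Icc 0 ((p - s) * B) → IsEquilibrium p s B η Ψ →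
        ((η ≤ Ψ₂ p s B / (B * p) + s / p → Ψ ∈ Set.Icc 0 (Ψ₂ p s B)) ∧
         (Ψ₂ p s B / (B * p) + s / p ≤ η ∧
            η ≤ (p + s) ^ 2 * (2 - p - s) / (2 * p * (1 - p - s) ^ 2) + s / p →
            Ψ ∈ Set.Icc (Ψ₂ p s B) (p + s)) ∧
         ((p + s) ^ 2 * (2 - p - s) / (2 * p * (1 - p - s) ^ 2) + s / p < η →
            Ψ ∈ Set.Icc (p + s) ((p - s) * B)))) := by
  have hp : 0 < p := hs.trans hsp
  have hq : 0 < 1 - p - s := by linarith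
  have hq2 : (0:ℝ) < 1 - (1 - p - s) ^ 2 := by nlinarith
  rw [gt_iff_lt, div_lt_iff₀ hq2] at hBgt
  obtain ⟨hP2pos, hP2eq⟩ := psi2_spec p s B hq hB
  have hP2lt : Ψ₂ p s B < p + s := psi2_lt p s B hq (by linarith) hB hBgt hP2eq
  have hP1lt : Ψ₁ p s B < p + s := psi1_lt p s B hq (by linarith) hB hBgt
  have hKB : 2 * (1 - p - s) ^ 2 * (p + s) < ((p + s) ^ 2 * (2 - p - s)) * B := by
    nlinarith [mul_lt_mul_of_pos_left hBgt (show (0:ℝ) < p + s by linarith)]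
  have hMpos : 0 < (p - s) * B := lt_of_lt_of_le (by linarith) hcap
  intro η hη1 hη2
  obtain ⟨k, hkdef⟩ : ∃ k : ℝ, k = η * p - s := ⟨_, rfl⟩
  have hk0 : 0 ≤ k := by
    have := (div_le_iff₀ hp).mp hη1
    rw [hkdef]; linarith
  have hk1 : k ≤ p - s := by
    have := mul_le_mul_of_nonneg_right hη2 hp.le
    rw [hkdef]; linarith
  -- key identity at Ψ₂
  have hIdP2 : B * (Ψ₂ p s B * A₂ p s (Ψ₂ p s B) - k * R p s (Ψ₂ p s B))
      = (1 - p - s) * (1 - Ψ₂ p s B) * (Ψ₂ p s B - k * B) := by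
    simp only [A₂, R]
    linear_combination (Ψ₂ p s B / 2) * hP2eq
  -- value at p+s
  have hA12 : A₁ p s (p + s) = A₂ p s (p + s) := by simp only [A₁, A₂]; ring
  have hFps : (p + s) * A₂ p s (p + s) - k * R p s (p + s)
      = ((p + s) ^ 2 * (2 - p - s) - 2 * (1 - p - s) ^ 2 * k) / 2 := by
    simp only [A₂, R]; ring
  -- master characterization of equilibria
  have hkey : ∀ Ψ : ℝ, Ψ ∈ Set.Icc 0 ((p - s) * B) → IsEquilibrium p s B η Ψ →
      ((k * B ≤ Ψ₂ p s B → Ψ = k * B) ∧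
       (Ψ₂ p s B ≤ k * B → 2 * (1 - p - s) ^ 2 * k ≤ (p + s) ^ 2 * (2 - p - s) →
          Ψ₂ p s B ≤ Ψ ∧ Ψ ≤ p + s ∧ Ψ * A₂ p s Ψ = k * R p s Ψ) ∧
       ((p + s) ^ 2 * (2 - p - s) < 2 * (1 - p - s) ^ 2 * k →
          p + s ≤ Ψ ∧ Ψ * A₁ p s Ψ = k * R p s Ψ)) := by
    rintro Ψ ⟨hΨ0, hΨM⟩ heq
    rw [IsEquilibrium, ← hkdef] at heq
    rcases heq with ⟨hlt, ⟨hge2, heqn⟩ | ⟨hlt2, hlin⟩⟩ | ⟨hgeps, ⟨_, heqn⟩ | ⟨hlt1, _⟩⟩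
    · -- cubic branch
      have hF2Ψ : Ψ * A₂ p s Ψ - k * R p s Ψ = 0 := by rw [heqn]; ring
      refine ⟨?_, fun _ _ => ⟨hge2, hlt.le, heqn⟩, ?_⟩
      · intro hkB
        have h1 : 0 ≤ B * (Ψ₂ p s B * A₂ p s (Ψ₂ p s B) - k * R p s (Ψ₂ p s B)) := by
          rw [hIdP2]
          have h2 : (0:ℝ) ≤ 1 - Ψ₂ p s B := by linarith
          exact mul_nonneg (mul_nonneg hq.le h2) (by linarith)
        have hF2P2 : 0 ≤ Ψ₂ p s B * A₂ p s (Ψ₂ p s B) - k * R p s (Ψ₂ p s B) := by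
          by_contra hcon
          push_neg at hcon
          nlinarith [h1]
        have hle : Ψ ≤ Ψ₂ p s B := by
          by_contra hcon
          push_neg at hcon
          have := F2mono p s k (Ψ₂ p s B) Ψ hq hk0 hP2pos.le hcon
          linarith
        have hΨP2 : Ψ = Ψ₂ p s B := le_antisymm hle hge2
        have hz : (1 - p - s) * (1 - Ψ₂ p s B) * (Ψ₂ p s B - k * B) = 0 := by
          rw [← hIdP2, ← hΨP2, hF2Ψ, mul_zero]
        have hzz : Ψ₂ p s B - k * B = 0 := by
          rcases mul_eq_zero.mp hz with h | h
          · exfalso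
            rcases mul_eq_zero.mp h with h' | h' <;> nlinarith
          · exact h
        linarith
      · intro hbig
        exfalso
        have h1 := F2mono p s k Ψ (p + s) hq hk0 hΨ0 hlt
        rw [hFps] at h1
        linarith
    · -- linear low branch
      refine ⟨fun _ => hlin, ?_, ?_⟩
      · intro hP2kB _
        exfalso
        rw [hlin] at hlt2
        linarith
      · intro hbig
        exfalso
        have h1 : ((p + s) ^ 2 * (2 - p - s)) * B < (2 * (1 - p - s) ^ 2 * k) * B :=
          mul_lt_mul_of_pos_right hbig hB
        have h2 : k * B < p + s := by rw [hlin] at hlt2; linarith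
        have h3 : 2 * (1 - p - s) ^ 2 * (k * B) < 2 * (1 - p - s) ^ 2 * (p + s) :=
          mul_lt_mul_of_pos_left h2 (by positivity)
        nlinarith [hKB, h1, h3]
    · -- quadratic branch
      have hF1Ψ : Ψ * A₁ p s Ψ - k * R p s Ψ = 0 := by rw [heqn]; ring
      have hF1ps : (p + s) * A₁ p s (p + s) - k * R p s (p + s)
          = ((p + s) ^ 2 * (2 - p - s) - 2 * (1 - p - s) ^ 2 * k) / 2 := by
        rw [hA12]; exact hFps
      refine ⟨?_, ?_, fun _ => ⟨hgeps, heqn⟩⟩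
      · intro hkB
        exfalso
        have hq2pos : (0:ℝ) < 2 * (1 - p - s) ^ 2 := by positivity
        have c1 : 2 * (1 - p - s) ^ 2 * (k * B) ≤ 2 * (1 - p - s) ^ 2 * (Ψ₂ p s B) :=
          mul_le_mul_of_nonneg_left hkB hq2pos.le
        have c2 : 2 * (1 - p - s) ^ 2 * (Ψ₂ p s B) < 2 * (1 - p - s) ^ 2 * (p + s) :=
          mul_lt_mul_of_pos_left hP2lt hq2pos
        have c4 : (2 * (1 - p - s) ^ 2 * k) * B < ((p + s) ^ 2 * (2 - p - s)) * B := by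
          nlinarith [hKB]
        have c5 : 2 * (1 - p - s) ^ 2 * k < (p + s) ^ 2 * (2 - p - s) :=
          lt_of_mul_lt_mul_right c4 hB.le
        have hpos : 0 < (p + s) * A₁ p s (p + s) - k * R p s (p + s) := by
          rw [hF1ps]; linarith
        rcases eq_or_lt_of_le hgeps with he | hl
        · rw [← he] at hF1Ψ; linarith
        · have := F1mono p s k (p + s) Ψ hq (by linarith) hk0 le_rfl hl
          linarith
      · intro _ hsmall
        have hΨeq : Ψ = p + s := by
          rcases eq_or_lt_of_le hgeps with he | hl
          · exact he.symm
          · exfalso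
            have := F1mono p s k (p + s) Ψ hq (by linarith) hk0 le_rfl hl
            rw [hF1ps] at this
            linarith
        refine ⟨by linarith, le_of_eq hΨeq, ?_⟩
        rw [hΨeq] at heqn ⊢
        rw [← hA12]
        exact heqn
    · -- linear high branch: impossible
      exact absurd (hlt1.trans hP1lt) (not_lt.2 hgeps)
  -- existence
  have hexist : ∃ Ψ : ℝ, Ψ ∈ Set.Icc 0 ((p - s) * B) ∧ IsEquilibrium p s B η Ψ := by
    rcases le_or_gt (k * B) (Ψ₂ p s B) with hc1 | hc1
    · refine ⟨k * B, ⟨mul_nonneg hk0 hB.le, by linarith⟩, ?_⟩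
      rw [IsEquilibrium, ← hkdef]
      rcases lt_or_eq_of_le hc1 with hlt | heqq
      · exact Or.inl ⟨by linarith, Or.inr ⟨hlt, rfl⟩⟩
      · refine Or.inl ⟨by linarith, Or.inl ⟨heqq.ge, ?_⟩⟩
        have hz : B * (Ψ₂ p s B * A₂ p s (Ψ₂ p s B) - k * R p s (Ψ₂ p s B)) = 0 := by
          rw [hIdP2, heqq]; ring
        have hz2 : Ψ₂ p s B * A₂ p s (Ψ₂ p s B) - k * R p s (Ψ₂ p s B) = 0 := by
          rcases mul_eq_zero.mp hz with h | h
          · exact absurd h hB.ne'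
          · exact h
        rw [heqq]
        linarith
    · rcases le_or_gt (2 * (1 - p - s) ^ 2 * k) ((p + s) ^ 2 * (2 - p - s)) with hc2 | hc2
      · -- IVT on [Ψ₂, p+s] for the cubic
        have hcont : ContinuousOn (fun x => x * A₂ p s x - k * R p s x)
            (Set.Icc (Ψ₂ p s B) (p + s)) := by
          apply Continuous.continuousOn
          simp only [A₂, R]
          fun_prop
        have hfa : Ψ₂ p s B * A₂ p s (Ψ₂ p s B) - k * R p s (Ψ₂ p s B) ≤ 0 := by
          by_contra hcon
          push_neg at hcon
          have h1 : 0 < B * (Ψ₂ p s B * A₂ p s (Ψ₂ p s B) - k * R p s (Ψ₂ p s B)) :=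
            mul_pos hB hcon
          rw [hIdP2] at h1
          nlinarith [mul_pos hq (show (0:ℝ) < 1 - Ψ₂ p s B by linarith)]
        have hfb : 0 ≤ (p + s) * A₂ p s (p + s) - k * R p s (p + s) := by
          rw [hFps]
          linarith
        obtain ⟨Ψ, hmem, hval⟩ :=
          intermediate_value_Icc hP2lt.le hcont (Set.mem_Icc.mpr ⟨hfa, hfb⟩)
        replace hval : Ψ * A₂ p s Ψ - k * R p s Ψ = 0 := hval
        refine ⟨Ψ, ⟨by linarith [hmem.1], by linarith [hmem.2]⟩, ?_⟩
        rw [IsEquilibrium, ← hkdef]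
        rcases lt_or_eq_of_le hmem.2 with hlt | heqps
        · exact Or.inl ⟨hlt, Or.inl ⟨hmem.1, by linarith⟩⟩
        · refine Or.inr ⟨heqps.ge, Or.inl ⟨by linarith, ?_⟩⟩
          rw [heqps] at hval ⊢
          rw [hA12]
          linarith
      · -- IVT on [p+s, (p-s)B] for the quadratic
        have hcont : ContinuousOn (fun x => x * A₁ p s x - k * R p s x)
            (Set.Icc (p + s) ((p - s) * B)) := by
          apply Continuous.continuousOn
          simp only [A₁, R]
          fun_prop
        have hfa : (p + s) * A₁ p s (p + s) - k * R p s (p + s) ≤ 0 := by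
          rw [hA12, hFps]
          linarith
        have hfb : 0 ≤ ((p - s) * B) * A₁ p s ((p - s) * B) - k * R p s ((p - s) * B) :=
          quad_end p s B k hs hsp hps hB hBgt hcap hk0 hk1
        obtain ⟨Ψ, hmem, hval⟩ :=
          intermediate_value_Icc hcap hcont (Set.mem_Icc.mpr ⟨hfa, hfb⟩)
        replace hval : Ψ * A₁ p s Ψ - k * R p s Ψ = 0 := hval
        refine ⟨Ψ, ⟨by linarith [hmem.1], hmem.2⟩, ?_⟩
        rw [IsEquilibrium, ← hkdef]
        exact Or.inr ⟨hmem.1, Or.inl ⟨by linarith [hmem.1], by linarith⟩⟩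
  obtain ⟨Ψ', hΨ'⟩ := hexist
  constructor
  · refine ⟨Ψ', hΨ', ?_⟩
    intro Ψ hΨ
    obtain ⟨h1, h2, h3⟩ := hkey Ψ hΨ.1 hΨ.2
    obtain ⟨h1', h2', h3'⟩ := hkey Ψ' hΨ'.1 hΨ'.2
    rcases le_or_gt (k * B) (Ψ₂ p s B) with hc1 | hc1
    · rw [h1 hc1, h1' hc1]
    · rcases le_or_gt (2 * (1 - p - s) ^ 2 * k) ((p + s) ^ 2 * (2 - p - s)) with hc2 | hc2
      · obtain ⟨ha1, ha2, ha3⟩ := h2 hc1.le hc2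
        obtain ⟨hb1, hb2, hb3⟩ := h2' hc1.le hc2
        rcases lt_trichotomy Ψ Ψ' with h | h | h
        · have := F2mono p s k Ψ Ψ' hq hk0 (le_trans hP2pos.le ha1) h
          rw [ha3, hb3] at this
          linarith
        · exact h
        · have := F2mono p s k Ψ' Ψ hq hk0 (le_trans hP2pos.le hb1) h
          rw [ha3, hb3] at this
          linarith
      · obtain ⟨ha1, ha2⟩ := h3 hc2
        obtain ⟨hb1, hb2⟩ := h3' hc2
        rcases lt_trichotomy Ψ Ψ' with h | h | h
        · have := F1mono p s k Ψ Ψ' hq (by linarith) hk0 ha1 h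
          rw [ha2, hb2] at this
          linarith
        · exact h
        · have := F1mono p s k Ψ' Ψ hq (by linarith) hk0 hb1 h
          rw [ha2, hb2] at this
          linarith
  · intro Ψ hΨmem hΨeq
    obtain ⟨h1, h2, h3⟩ := hkey Ψ hΨmem hΨeq
    refine ⟨?_, ?_, ?_⟩
    · intro hηle
      have hkle : k * B ≤ Ψ₂ p s B := by
        have h' : η * p ≤ (Ψ₂ p s B / (B * p) + s / p) * p :=
          mul_le_mul_of_nonneg_right hηle hp.le
        have h'' : (Ψ₂ p s B / (B * p) + s / p) * p = Ψ₂ p s B / B + s := by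
          field_simp
        rw [h''] at h'
        have hk' : k ≤ Ψ₂ p s B / B := by rw [hkdef]; linarith
        rw [le_div_iff₀ hB] at hk'
        linarith
      rw [h1 hkle]
      exact ⟨mul_nonneg hk0 hB.le, hkle⟩
    · rintro ⟨hη1', hη2'⟩
      have hc1 : Ψ₂ p s B ≤ k * B := by
        have h' : (Ψ₂ p s B / (B * p) + s / p) * p ≤ η * p :=
          mul_le_mul_of_nonneg_right hη1' hp.le
        have h'' : (Ψ₂ p s B / (B * p) + s / p) * p = Ψ₂ p s B / B + s := by
          field_simp
        rw [h''] at h'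
        have hk' : Ψ₂ p s B / B ≤ k := by rw [hkdef]; linarith
        rw [div_le_iff₀ hB] at hk'
        linarith
      have hc2 : 2 * (1 - p - s) ^ 2 * k ≤ (p + s) ^ 2 * (2 - p - s) := by
        have h' : η * p ≤ ((p + s) ^ 2 * (2 - p - s) / (2 * p * (1 - p - s) ^ 2) + s / p) * p :=
          mul_le_mul_of_nonneg_right hη2' hp.le
        have h'' : ((p + s) ^ 2 * (2 - p - s) / (2 * p * (1 - p - s) ^ 2) + s / p) * p
            = (p + s) ^ 2 * (2 - p - s) / (2 * (1 - p - s) ^ 2) + s := by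
          field_simp
        rw [h''] at h'
        have hkle : k ≤ (p + s) ^ 2 * (2 - p - s) / (2 * (1 - p - s) ^ 2) := by
          rw [hkdef]; linarith
        rw [le_div_iff₀ (by positivity : (0:ℝ) < 2 * (1 - p - s) ^ 2)] at hkle
        linarith
      obtain ⟨ha1, ha2, _⟩ := h2 hc1 hc2
      exact ⟨ha1, ha2⟩
    · intro hηgt
      have hc2 : (p + s) ^ 2 * (2 - p - s) < 2 * (1 - p - s) ^ 2 * k := by
        have h' : ((p + s) ^ 2 * (2 - p - s) / (2 * p * (1 - p - s) ^ 2) + s / p) * p < η * p :=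
          mul_lt_mul_of_pos_right hηgt hp
        have h'' : ((p + s) ^ 2 * (2 - p - s) / (2 * p * (1 - p - s) ^ 2) + s / p) * p
            = (p + s) ^ 2 * (2 - p - s) / (2 * (1 - p - s) ^ 2) + s := by
          field_simp
        rw [h''] at h'
        have hkgt : (p + s) ^ 2 * (2 - p - s) / (2 * (1 - p - s) ^ 2) < k := by
          rw [hkdef]; linarith
        rw [div_lt_iff₀ (by positivity : (0:ℝ) < 2 * (1 - p - s) ^ 2)] at hkgt
        linarith
      obtain ⟨ha1, _⟩ := h3 hc2
      exact ⟨ha1, hΨmem.2⟩
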